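/- arXiv:2109.09429 — 3 statements merged into one kernel-verified Lean document; each statement's English description precedes it below -/
import Mathlib

section
/- With the same setting, suppose additionally that I_H is self-adjoint-compatible in the sense that (I_H f, v) = 0 for all v ∈ W = ker(I_H) and f ∈ H¹_P(Ω). Then for f ∈ H¹(Ω) and v ∈ W, |(f, v)| ≤ C₀² H² ‖∇f‖_{L²} ‖∇v‖_{L²}. -/
/-- super-approximation Clément-kernel estimate: if additionally
`(I_H f, v) = 0` for all `v ∈ W = ker I_H`, then for `f ∈ H¹` and `v ∈ W`,
`|(f, v)| ≤ C₀² H² ‖∇f‖ ‖∇v‖`. -/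
theorem stmt7 {X : Type*} [NormedAddCommGroup X] [InnerProductSpace ℂ X]
    (H1 : Submodule ℂ X) (IH : H1 →ₗ[ℂ] X) (g : X → ℝ) (C₀ Hh : ℝ)
    (hC₀ : 0 < C₀) (hH : 0 < Hh)
    (happrox : ∀ v : H1, ‖(v : X) - IH v‖ ≤ C₀ * Hh * g (v : X))
    (hcompat : ∀ f v : H1, IH v = 0 → (inner ℂ (IH f) ((v : X)) : ℂ) = 0)
    (f v : H1) (hv : IH v = 0) :
    ‖(inner ℂ (f : X) (v : X) : ℂ)‖ ≤ C₀ ^ 2 * Hh ^ 2 * g (f : X) * g (v : X) := by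
  have key : (inner ℂ (f : X) (v : X) : ℂ)
      = inner ℂ ((f : X) - IH f) ((v : X) - IH v) := by
    rw [hv, sub_zero, inner_sub_left, hcompat f v hv, sub_zero]
  rw [key]
  calc ‖(inner ℂ ((f : X) - IH f) ((v : X) - IH v) : ℂ)‖
      ≤ ‖(f : X) - IH f‖ * ‖(v : X) - IH v‖ := norm_inner_le_norm _ _
    _ ≤ (C₀ * Hh * g (f : X)) * (C₀ * Hh * g (v : X)) := by
        apply mul_le_mul (happrox f) (happrox v) (norm_nonneg _)
        exact le_trans (norm_nonneg _) (happrox f)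
    _ = C₀ ^ 2 * Hh ^ 2 * g (f : X) * g (v : X) := by ring
end

section
/- Decomposition lemma: in the setting of the previous statement with a coercive Hermitian form, let Ψ = span{ψ_j : j=1,…,N} where ψ_j minimizes a(ψ,ψ) subject to (ψ, φ_k) = δ_{jk}, and let W = {w ∈ H : (w, φ_k) = 0 ∀k}. Then H = Ψ ⊕ W and a(v, w) = 0 for all v ∈ Ψ, w ∈ W. -/
/-- decomposition lemma: with `Ψ = span{ψ_j}` the span of the constrained
minimizers and `W = {w : (w,φ_k) = 0 ∀k}`, one has `a(Ψ, W) = 0` and `H = Ψ ⊕ W`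
(every `v` splits as `v = p + w` with `p ∈ Ψ`, `w ∈ W`, and `Ψ ∩ W = 0`). -/
theorem stmt10 {H : Type*} [NormedAddCommGroup H] [InnerProductSpace ℂ H] [CompleteSpace H]
    (a : H → H → ℂ) (N : ℕ) (φ : Fin N → H)
    (hind : LinearIndependent ℂ φ)
    (hHerm : ∀ v w, a v w = (starRingEnd ℂ) (a w v))
    (hadd : ∀ v w₁ w₂, a v (w₁ + w₂) = a v w₁ + a v w₂)
    (hsmul : ∀ (η : ℂ) (v w : H), a v (η • w) = η * a v w)
    (M α : ℝ) (hα : 0 < α)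
    (hbdd : ∀ v w, ‖a v w‖ ≤ M * ‖v‖ * ‖w‖)
    (hcoer : ∀ v, α * ‖v‖ ^ 2 ≤ (a v v).re)
    (ψ : Fin N → H)
    (hcon : ∀ j k, (inner ℂ (φ k) (ψ j) : ℂ) = if j = k then 1 else 0)
    (hmin : ∀ j, ∀ v : H, (∀ k, (inner ℂ (φ k) v : ℂ) = if j = k then 1 else 0) →
      (a (ψ j) (ψ j)).re ≤ (a v v).re) :
    (∀ v ∈ Submodule.span ℂ (Set.range ψ), ∀ w : H,
        (∀ k, (inner ℂ (φ k) w : ℂ) = 0) → a v w = 0) ∧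
    (∀ v : H, ∃ p ∈ Submodule.span ℂ (Set.range ψ),
        ∀ k, (inner ℂ (φ k) (v - p) : ℂ) = 0) ∧
    (∀ p ∈ Submodule.span ℂ (Set.range ψ), (∀ k, (inner ℂ (φ k) p : ℂ) = 0) → p = 0) := by
  -- basic linearity facts
  have hzero : ∀ v, a v 0 = 0 := by
    intro v
    have := hadd v 0 0
    simpa using this.symm
  have hzeroL : ∀ w, a 0 w = 0 := by
    intro w
    rw [hHerm, hzero]; simp
  have haddL : ∀ v₁ v₂ w, a (v₁ + v₂) w = a v₁ w + a v₂ w := by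
    intro v₁ v₂ w
    rw [hHerm, hadd, map_add, ← hHerm, ← hHerm]
  have hsmulL : ∀ (η : ℂ) v w, a (η • v) w = (starRingEnd ℂ) η * a v w := by
    intro η v w
    rw [hHerm, hsmul, map_mul, ← hHerm]
  -- a-orthogonality for the generators
  have haorth : ∀ j (w : H), (∀ k, (inner ℂ (φ k) w : ℂ) = 0) → a (ψ j) w = 0 := by
    intro j w hw
    by_contra hc
    set c : ℂ := a (ψ j) w with hcdef
    have hS : 0 < Complex.normSq c := Complex.normSq_pos.2 hc
    set S : ℝ := Complex.normSq c with hSdef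
    have hRnn : 0 ≤ (a w w).re := by
      have := hcoer w
      nlinarith [sq_nonneg ‖w‖]
    set R : ℝ := (a w w).re with hRdef
    set s : ℝ := 1 / (R + 1) with hsdef
    have hspos : 0 < s := by positivity
    have hsR : s * R < 1 := by
      rw [hsdef, div_mul_eq_mul_div, div_lt_one (by linarith)]
      linarith
    set t : ℂ := -(s : ℂ) * (starRingEnd ℂ) c with htdef
    have hcomp : ∀ k, (inner ℂ (φ k) (ψ j + t • w) : ℂ) = if j = k then 1 else 0 := by
      intro k
      rw [inner_add_right, inner_smul_right, hw k, hcon j k]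
      ring
    have hle := hmin j (ψ j + t • w) hcomp
    have hwwre : a w w = ((R : ℝ) : ℂ) := by
      have h := hHerm w w
      rw [hRdef]
      exact (Complex.conj_eq_iff_re.mp h.symm).symm
    have key : c * (starRingEnd ℂ) c = ((S : ℝ) : ℂ) := by
      rw [hSdef, Complex.mul_conj]
    have h1 : a w (ψ j) = (starRingEnd ℂ) c := by rw [hHerm]
    have hexp : a (ψ j + t • w) (ψ j + t • w)
        = a (ψ j) (ψ j) + ((-2 * (s * S) : ℝ) : ℂ) + ((s ^ 2 * S * R : ℝ) : ℂ) := by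
      rw [hadd, hsmul, haddL, haddL, hsmulL, hsmulL, h1, ← hcdef, hwwre, htdef]
      simp only [map_mul, map_neg, Complex.conj_conj, Complex.conj_ofReal]
      push_cast
      linear_combination (-(2:ℂ) * (s:ℂ) + (s:ℂ)^2 * (R:ℂ)) * key
    have hre : (a (ψ j + t • w) (ψ j + t • w)).re
        = (a (ψ j) (ψ j)).re + (-2 * (s * S)) + (s ^ 2 * S * R) := by
      rw [hexp, Complex.add_re, Complex.add_re, Complex.ofReal_re, Complex.ofReal_re]
    rw [hre] at hle
    have h0 : 0 ≤ -2 * (s * S) + s ^ 2 * S * R := by linarith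
    nlinarith [mul_pos hspos hS]
  refine ⟨?_, ?_, ?_⟩
  · -- a-orthogonality on the span
    intro v hv w hw
    induction hv using Submodule.span_induction with
    | mem x hx =>
        obtain ⟨j, rfl⟩ := hx
        exact haorth j w hw
    | zero => exact hzeroL w
    | add x y _ _ hx hy => rw [haddL, hx, hy, add_zero]
    | smul η x _ hx => rw [hsmulL, hx, mul_zero]
  · -- decomposition
    intro v
    refine ⟨∑ k, (inner ℂ (φ k) v : ℂ) • ψ k, ?_, ?_⟩
    · exact Submodule.sum_mem _ fun k _ =>
        Submodule.smul_mem _ _ (Submodule.subset_span ⟨k, rfl⟩)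
    · intro k
      rw [inner_sub_right, inner_sum]
      simp only [inner_smul_right, hcon]
      rw [Finset.sum_eq_single k]
      · simp
      · intro b _ hb
        simp [hb]
      · simp
  · -- trivial intersection
    intro p hp hpz
    rw [Submodule.mem_span_range_iff_exists_fun] at hp
    obtain ⟨c, rfl⟩ := hp
    have hc : ∀ k, c k = 0 := by
      intro k
      have := hpz k
      rw [inner_sum] at this
      simp only [inner_smul_right, hcon] at this
      rw [Finset.sum_eq_single k] at this
      · simpa using this
      · intro b _ hb
        simp [hb]
      · simp
    simp [hc]
end

section
/- Céa-type energy estimate with Clément kernel: let u ∈ H¹_P(Ω) solve a(u,v) = (f,v) for all v ∈ H¹_P(Ω), and let u_H ∈ Ψ_H be its Galerkin approximation: a(u_H, v_H) = (f, v_H) for all v_H ∈ Ψ_H. Assume u − u_H ∈ W = ker(I_H), that (g,w) ≤ C₀H‖g‖‖∇w‖ for g ∈ L², w ∈ W, and that ε‖∇w‖ ≤ √2‖w‖_e for w ∈ W. Then ‖u − u_H‖_e ≤ √2 C₀ (H/ε) ‖f‖_{L²}. -/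
/-- Céa-type energy estimate: if `u` solves `a(u,v) = (f,v)` on `H¹_P`,
`u_H` is its Galerkin approximation in the multiscale space `Ψ_H` with `a(Ψ_H, W) = 0`,
`u − u_H ∈ W = ker I_H`, `(g,w) ≤ C₀H‖g‖‖∇w‖` on `W` and `ε‖∇w‖ ≤ √2‖w‖ₑ` on `W`,
then `‖u − u_H‖ₑ ≤ √2 C₀ (H/ε) ‖f‖`. -/
theorem stmt11 {X : Type*} [NormedAddCommGroup X] [InnerProductSpace ℂ X]
    (a : X → X → ℂ) (S Psi W : Set X) (g : X → ℝ)
    (u uH f : X) (C₀ ε Hh : ℝ)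
    (hC₀ : 0 < C₀) (hε : 0 < ε) (hH : 0 < Hh)
    (hHerm : ∀ v w, a v w = (starRingEnd ℂ) (a w v))
    (hadd₁ : ∀ v₁ v₂ w, a (v₁ + v₂) w = a v₁ w + a v₂ w)
    (hsub₁ : ∀ v₁ v₂ w, a (v₁ - v₂) w = a v₁ w - a v₂ w)
    (hpos : ∀ v, 0 ≤ (a v v).re)
    (hWS : W ⊆ S)
    (huH : uH ∈ Psi)
    (hu : ∀ v ∈ S, a u v = (inner ℂ v f : ℂ))
    (hGal : ∀ v ∈ Psi, a uH v = (inner ℂ v f : ℂ))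
    (horth : ∀ p ∈ Psi, ∀ w ∈ W, a p w = 0)
    (hmem : u - uH ∈ W)
    (hclem : ∀ f' : X, ∀ w ∈ W, ‖(inner ℂ f' w : ℂ)‖ ≤ C₀ * Hh * ‖f'‖ * g w)
    (hge : ∀ w ∈ W, ε * g w ≤ Real.sqrt 2 * Real.sqrt (a w w).re) :
    Real.sqrt (a (u - uH) (u - uH)).re ≤ Real.sqrt 2 * C₀ * (Hh / ε) * ‖f‖ := by
  set e := u - uH with he
  set t := Real.sqrt (a e e).re with ht
  have ht0 : 0 ≤ t := Real.sqrt_nonneg _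
  have htt : t * t = (a e e).re := Real.mul_self_sqrt (hpos e)
  have h1 : a e e = (inner ℂ e f : ℂ) := by
    rw [he, hsub₁, hu _ (hWS hmem), horth uH huH _ hmem, sub_zero]
  have h2 : (a e e).re ≤ ‖(inner ℂ f e : ℂ)‖ := by
    rw [h1]
    calc (inner ℂ e f : ℂ).re ≤ ‖(inner ℂ e f : ℂ)‖ := Complex.re_le_norm _
      _ = ‖(inner ℂ f e : ℂ)‖ := by rw [← inner_conj_symm e f, RCLike.norm_conj]
  have h3 : ‖(inner ℂ f e : ℂ)‖ ≤ C₀ * Hh * ‖f‖ * g e := hclem f e hmem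
  have h4 : ε * g e ≤ Real.sqrt 2 * t := hge e hmem
  have hg : g e ≤ Real.sqrt 2 * t / ε := by
    rw [le_div_iff₀ hε]; linarith [h4]
  have key : t * t ≤ C₀ * Hh * ‖f‖ * (Real.sqrt 2 * t / ε) := by
    rw [htt]
    calc (a e e).re ≤ C₀ * Hh * ‖f‖ * g e := le_trans h2 h3
      _ ≤ C₀ * Hh * ‖f‖ * (Real.sqrt 2 * t / ε) := by
          apply mul_le_mul_of_nonneg_left hg
          positivity
  rcases eq_or_lt_of_le ht0 with h0 | h0
  · rw [← h0]; positivity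
  · have := (mul_le_mul_iff_of_pos_right h0).mp (by
      calc t * t ≤ C₀ * Hh * ‖f‖ * (Real.sqrt 2 * t / ε) := key
        _ = Real.sqrt 2 * C₀ * (Hh / ε) * ‖f‖ * t := by ring)
    exact this
end
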